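/- arXiv:2107.07176 — 2 statements merged into one kernel-verified Lean document; each statement's English description precedes it below -/
import Mathlib

section
/- In the Tikhonov-Mann setting, for every n ∈ ℕ: λ_n·d(x_n,Tx_n) ≤ d(x_n,x_{n+1}) + 2M·(1−β_n). -/
/-- A `W`-hyperbolic space: a metric space together with a convexity mapping
`W x y l` (written `(1-l)x + l y` in the paper) satisfying (W1)-(W4). -/
structure WHyp (X : Type*) [MetricSpace X] where
  W : X → X → ℝ → X
  W1 : ∀ x y z : X, ∀ l ∈ Set.Icc (0:ℝ) 1,
    dist z (W x y l) ≤ (1 - l) * dist z x + l * dist z y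
  W2 : ∀ x y : X, ∀ l ∈ Set.Icc (0:ℝ) 1, ∀ l' ∈ Set.Icc (0:ℝ) 1,
    dist (W x y l) (W x y l') = |l - l'| * dist x y
  W3 : ∀ x y : X, ∀ l ∈ Set.Icc (0:ℝ) 1, W x y l = W y x (1 - l)
  W4 : ∀ x y z w : X, ∀ l ∈ Set.Icc (0:ℝ) 1,
    dist (W x z l) (W y w l) ≤ (1 - l) * dist x y + l * dist z w

/-!
The iterates stay in `C` and in the closed ball of radius `M` about `p`, because convex
combinations and `T` (which fixes `p`) do not increase the distance to `p`. Then
`λₙ d(xₙ, T xₙ) = d(xₙ, (1-λₙ)xₙ + λₙ T xₙ)`, and by (W4) and nonexpansiveness the point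
`(1-λₙ)xₙ + λₙ T xₙ` lies within `d(xₙ, yₙ) ≤ (1-βₙ) d(xₙ, u) ≤ 2M(1-βₙ)` of `xₙ₊₁`.
-/

namespace WHyp

variable {X : Type*} [MetricSpace X] (H : WHyp X)

lemma W_zero (x y : X) : H.W x y 0 = x := by
  have h := H.W1 x y x 0 (by norm_num)
  rw [sub_zero, one_mul, dist_self, zero_mul, add_zero] at h
  exact (dist_le_zero.1 h).symm

lemma dist_W_left (x y : X) {l : ℝ} (hl : l ∈ Set.Icc (0:ℝ) 1) :
    dist x (H.W x y l) = l * dist x y := by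
  have h := H.W2 x y 0 (by norm_num) l hl
  rwa [W_zero, zero_sub, abs_neg, abs_of_nonneg hl.1] at h

lemma dist_W_right_le (x y : X) {l : ℝ} (hl : l ∈ Set.Icc (0:ℝ) 1) :
    dist y (H.W x y l) ≤ (1 - l) * dist y x := by
  simpa using H.W1 x y y l hl

lemma dist_W_le_of_le {x y z : X} {r l : ℝ} (hl : l ∈ Set.Icc (0:ℝ) 1)
    (hx : dist z x ≤ r) (hy : dist z y ≤ r) : dist z (H.W x y l) ≤ r := by
  have h₁ := mul_le_mul_of_nonneg_left hx (sub_nonneg.2 hl.2)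
  have h₂ := mul_le_mul_of_nonneg_left hy hl.1
  linarith [H.W1 x y z l hl]

lemma dist_W_map_le {T : X → X} {x y : X} (hT : dist (T x) (T y) ≤ dist x y)
    {l : ℝ} (hl : l ∈ Set.Icc (0:ℝ) 1) :
    dist (H.W x (T x) l) (H.W y (T y) l) ≤ dist x y := by
  have h := mul_le_mul_of_nonneg_left hT hl.1
  linarith [H.W4 x y (T x) (T y) l hl]

end WHyp

lemma tikhonovMann_mem_and_dist_le {X : Type*} [MetricSpace X] (H : WHyp X) {C : Set X}
    (hCconv : ∀ x ∈ C, ∀ y ∈ C, ∀ l ∈ Set.Icc (0:ℝ) 1, H.W x y l ∈ C)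
    {T : X → X} (hTmaps : ∀ x ∈ C, T x ∈ C)
    (hTne : ∀ x ∈ C, ∀ y ∈ C, dist (T x) (T y) ≤ dist x y)
    {p : X} (hpC : p ∈ C) (hpfix : T p = p) {u : X} (huC : u ∈ C) {lam beta : ℕ → ℝ}
    (hlam : ∀ n, lam n ∈ Set.Icc (0:ℝ) 1) (hbeta : ∀ n, beta n ∈ Set.Icc (0:ℝ) 1)
    {x y : ℕ → X} (hx0 : x 0 ∈ C) (hy : ∀ n, y n = H.W u (x n) (beta n))
    (hx : ∀ n, x (n + 1) = H.W (y n) (T (y n)) (lam n))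
    {r : ℝ} (hx0r : dist p (x 0) ≤ r) (hur : dist p u ≤ r) (n : ℕ) :
    x n ∈ C ∧ dist p (x n) ≤ r := by
  induction n with
  | zero => exact ⟨hx0, hx0r⟩
  | succ n ih =>
    obtain ⟨hxC, hxr⟩ := ih
    have hyC : y n ∈ C := hy n ▸ hCconv u huC _ hxC _ (hbeta n)
    have hyr : dist p (y n) ≤ r := hy n ▸ H.dist_W_le_of_le (hbeta n) hur hxr
    have hTyr : dist p (T (y n)) ≤ r :=
      calc dist p (T (y n)) = dist (T p) (T (y n)) := by rw [hpfix]
        _ ≤ dist p (y n) := hTne p hpC _ hyC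
        _ ≤ r := hyr
    rw [hx n]
    exact ⟨hCconv _ hyC _ (hTmaps _ hyC) _ (hlam n), H.dist_W_le_of_le (hlam n) hyr hTyr⟩

theorem tm_lam_dist_xn_Txn
    {X : Type*} [MetricSpace X] (H : WHyp X) (C : Set X)
    (hCconv : ∀ x ∈ C, ∀ y ∈ C, ∀ l ∈ Set.Icc (0:ℝ) 1, H.W x y l ∈ C)
    (T : X → X) (hTmaps : ∀ x ∈ C, T x ∈ C)
    (hTne : ∀ x ∈ C, ∀ y ∈ C, dist (T x) (T y) ≤ dist x y)
    (p : X) (hpC : p ∈ C) (hpfix : T p = p)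
    (u : X) (huC : u ∈ C)
    (lam beta : ℕ → ℝ)
    (hlam : ∀ n, lam n ∈ Set.Icc (0:ℝ) 1) (hbeta : ∀ n, beta n ∈ Set.Icc (0:ℝ) 1)
    (x y : ℕ → X) (hx0 : x 0 ∈ C)
    (hy : ∀ n, y n = H.W u (x n) (beta n))
    (hx : ∀ n, x (n + 1) = H.W (y n) (T (y n)) (lam n))
    (M : ℝ) (hM : M = max (dist (x 0) p) (dist u p)) :
    ∀ n : ℕ, lam n * dist (x n) (T (x n)) ≤
      dist (x n) (x (n + 1)) + 2 * M * (1 - beta n) := by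
  intro n
  have hx0M : dist p (x 0) ≤ M := by rw [hM, dist_comm]; exact le_max_left _ _
  have huM : dist p u ≤ M := by rw [hM, dist_comm]; exact le_max_right _ _
  obtain ⟨hxC, hxM⟩ := tikhonovMann_mem_and_dist_le H hCconv hTmaps hTne hpC hpfix huC hlam
    hbeta hx0 hy hx hx0M huM n
  have hyC : y n ∈ C := hy n ▸ hCconv u huC _ hxC _ (hbeta n)
  have hxu : dist (x n) u ≤ 2 * M := by linarith [dist_triangle_left (x n) u p]
  have hWx : dist (H.W (x n) (T (x n)) (lam n)) (x (n + 1)) ≤ dist (x n) (y n) :=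
    hx n ▸ H.dist_W_map_le (hTne _ hxC _ hyC) (hlam n)
  calc lam n * dist (x n) (T (x n)) = dist (x n) (H.W (x n) (T (x n)) (lam n)) :=
        (H.dist_W_left _ _ (hlam n)).symm
    _ ≤ dist (x n) (x (n + 1)) + dist (x n) (y n) := by
        linarith [dist_triangle_right (x n) (H.W (x n) (T (x n)) (lam n)) (x (n + 1))]
    _ ≤ dist (x n) (x (n + 1)) + (1 - beta n) * dist (x n) u := by
        rw [hy n]; gcongr; exact H.dist_W_right_le _ _ (hbeta n)
    _ ≤ dist (x n) (x (n + 1)) + 2 * M * (1 - beta n) := by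
        linarith [mul_le_mul_of_nonneg_left hxu (sub_nonneg.2 (hbeta n).2)]
end

section
/- (Main theorem, asymptotic regularity under (C1_q)) In the Tikhonov-Mann setting, assume: σ₁ : ℕ → ℕ is a rate of divergence for the series ∑ (1−β_n); σ₃ : ℕ → ℕ is a Cauchy modulus for the convergent series ∑ |β_{n+1}−β_n|; σ₄ : ℕ → ℕ is a Cauchy modulus for the convergent series ∑ |λ_{n+1}−λ_n|; and K ∈ ℕ satisfies K ≥ M. Define χ(k) = max{σ₃(8K(k+1)−1), σ₄(8K(k+1)−1)}. Then the function Σ(k) = σ₁(χ(3k+2) + 2 + ⌈ln(6K(k+1))⌉) + 1 is a rate of asymptotic regularity for (x_n), i.e., d(x_n,x_{n+1}) ≤ 1/(k+1) for all k ∈ ℕ and all n ≥ Σ(k). -/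
theorem sum_range_le_of_le_one {f : ℕ → ℝ} (hf : ∀ i, f i ≤ 1) (n : ℕ) :
    ∑ i ∈ Finset.range n, f i ≤ n := by
  simpa using Finset.sum_le_card_nsmul (Finset.range n) f 1 fun i _ => hf i

theorem le_prod_mul_add_sum_of_le_mul_add {a b c : ℕ → ℝ} (hb : ∀ n, b n ∈ Set.Icc (0:ℝ) 1)
    (hc : ∀ n, 0 ≤ c n) (h : ∀ n, a (n + 1) ≤ b (n + 1) * a n + c n) {N n : ℕ} (hNn : N ≤ n) :
    a n ≤ (∏ j ∈ Finset.Ioc N n, b j) * a N + ∑ i ∈ Finset.Ico N n, c i := by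
  induction n, hNn using Nat.le_induction with
  | base => simp
  | succ n hNn ih =>
    rw [Finset.prod_Ioc_succ_top hNn, Finset.sum_Ico_succ_top hNn]
    have hS : 0 ≤ ∑ i ∈ Finset.Ico N n, c i := Finset.sum_nonneg fun i _ => hc i
    calc a (n + 1) ≤ b (n + 1) * ((∏ j ∈ Finset.Ioc N n, b j) * a N
          + ∑ i ∈ Finset.Ico N n, c i) + c n := (h n).trans (by gcongr; exact (hb (n + 1)).1)
      _ ≤ _ := by linarith [mul_le_of_le_one_left hS (hb (n + 1)).2]

theorem prod_le_exp_neg_sum_one_sub {ι : Type*} (s : Finset ι) {b : ι → ℝ}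
    (hb : ∀ i ∈ s, 0 ≤ b i) : ∏ i ∈ s, b i ≤ Real.exp (-∑ i ∈ s, (1 - b i)) := by
  rw [← Finset.sum_neg_distrib, Real.exp_sum]
  exact Finset.prod_le_prod hb fun i _ => by linarith [Real.add_one_le_exp (-(1 - b i))]

theorem sum_range_le_add_sum_Ioc {f : ℕ → ℝ} (hf0 : ∀ i, 0 ≤ f i) (hf1 : ∀ i, f i ≤ 1)
    {m N n : ℕ} (hmn : m ≤ n) :
    ∑ i ∈ Finset.range (m + 1), f i ≤ N + 1 + ∑ i ∈ Finset.Ioc N n, f i := by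
  have hsub : Finset.range (m + 1) ⊆ Finset.range (N + 1) ∪ Finset.Ioc N n := by
    intro i hi
    simp only [Finset.mem_union, Finset.mem_range, Finset.mem_Ioc] at hi ⊢
    omega
  have hdisj : Disjoint (Finset.range (N + 1)) (Finset.Ioc N n) := by
    rw [Finset.disjoint_left]
    intro i hi hi'
    simp only [Finset.mem_range, Finset.mem_Ioc] at hi hi'
    omega
  have hhead : ∑ i ∈ Finset.range (N + 1), f i ≤ N + 1 := by
    exact_mod_cast sum_range_le_of_le_one hf1 (N + 1)
  calc ∑ i ∈ Finset.range (m + 1), f i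
      ≤ ∑ i ∈ Finset.range (N + 1) ∪ Finset.Ioc N n, f i :=
        Finset.sum_le_sum_of_subset_of_nonneg hsub fun i _ _ => hf0 i
    _ ≤ _ := by rw [Finset.sum_union hdisj]; linarith

theorem le_add_one_of_rate_of_divergence {b : ℕ → ℝ} (hb : ∀ n, 0 ≤ b n) {σ : ℕ → ℕ}
    (hσ : ∀ n : ℕ, (n : ℝ) ≤ ∑ i ∈ Finset.range (σ n + 1), (1 - b i)) (n : ℕ) : n ≤ σ n + 1 := by
  exact_mod_cast (hσ n).trans (sum_range_le_of_le_one (fun i => by linarith [hb i]) _)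

theorem prod_Ioc_le_inv_of_rate_of_divergence {b : ℕ → ℝ} (hb : ∀ n, b n ∈ Set.Icc (0:ℝ) 1)
    {σ : ℕ → ℕ} (hσ : ∀ n : ℕ, (n : ℝ) ≤ ∑ i ∈ Finset.range (σ n + 1), (1 - b i))
    {r : ℝ} (hr : 0 < r) {N n : ℕ} (hn : σ (N + 1 + ⌈Real.log r⌉₊) ≤ n) :
    ∏ j ∈ Finset.Ioc N n, b j ≤ r⁻¹ := by
  have hdiv : Real.log r ≤ ∑ j ∈ Finset.Ioc N n, (1 - b j) := by
    have hsplit := sum_range_le_add_sum_Ioc (f := fun i => 1 - b i) (N := N)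
      (fun i => by linarith [(hb i).2]) (fun i => by linarith [(hb i).1]) hn
    have hdiverge := hσ (N + 1 + ⌈Real.log r⌉₊)
    have hceil := Nat.le_ceil (Real.log r)
    push_cast at hdiverge
    linarith
  calc ∏ j ∈ Finset.Ioc N n, b j ≤ Real.exp (-∑ j ∈ Finset.Ioc N n, (1 - b j)) :=
        prod_le_exp_neg_sum_one_sub _ fun j _ => (hb j).1
    _ ≤ Real.exp (-Real.log r) := Real.exp_le_exp.mpr (neg_le_neg hdiv)
    _ = r⁻¹ := by rw [Real.exp_neg, Real.exp_log hr]

theorem sum_Ico_le_of_cauchy_modulus {f : ℕ → ℝ} {σ : ℕ → ℕ}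
    (hσ : ∀ k : ℕ, ∀ n ≥ σ k, ∀ q : ℕ, ∑ i ∈ Finset.Icc (n + 1) (n + q), f i ≤ 1 / (k + 1))
    {j N : ℕ} (hj : 0 < j) (hN : σ (j - 1) ≤ N) (n : ℕ) :
    ∑ i ∈ Finset.Ico (N + 1) n, f i ≤ 1 / j := by
  have hIco : Finset.Ico (N + 1) n = Finset.Icc (N + 1) (N + (n - (N + 1))) := by
    ext i
    simp only [Finset.mem_Ico, Finset.mem_Icc]
    omega
  have hcast : ((j - 1 : ℕ) : ℝ) + 1 = j := by
    rw [← Nat.cast_add_one, Nat.sub_add_cancel hj]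
  rw [hIco, ← hcast]
  exact hσ _ N hN _

namespace WHyp

variable {X : Type*} [MetricSpace X] (H : WHyp X)

theorem dist_W_le {a b z : X} {l r : ℝ} (hl : l ∈ Set.Icc (0:ℝ) 1)
    (ha : dist a z ≤ r) (hb : dist b z ≤ r) : dist (H.W a b l) z ≤ r := by
  rw [dist_comm]
  calc dist z (H.W a b l) ≤ (1 - l) * dist z a + l * dist z b := H.W1 a b z l hl
    _ ≤ (1 - l) * r + l * r := by
        rw [dist_comm z a, dist_comm z b]
        gcongr
        · linarith [hl.2]
        · exact hl.1
    _ = r := by ring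

theorem dist_W_W_le (a b c d : X) {l l' : ℝ} (hl : l ∈ Set.Icc (0:ℝ) 1)
    (hl' : l' ∈ Set.Icc (0:ℝ) 1) :
    dist (H.W a b l) (H.W c d l') ≤ (1 - l) * dist a c + l * dist b d + |l - l'| * dist c d :=
  calc dist (H.W a b l) (H.W c d l')
      ≤ dist (H.W a b l) (H.W c d l) + dist (H.W c d l) (H.W c d l') := dist_triangle _ _ _
    _ ≤ _ := by rw [H.W2 c d l hl l' hl']; linarith [H.W4 a c b d l hl]

end WHyp

structure IsTikhonovMannIteration {X : Type*} [MetricSpace X] (H : WHyp X) (C : Set X)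
    (T : X → X) (p u : X) (lam beta : ℕ → ℝ) (x y : ℕ → X) : Prop where
  convex : ∀ a ∈ C, ∀ b ∈ C, ∀ l ∈ Set.Icc (0:ℝ) 1, H.W a b l ∈ C
  mapsTo : ∀ a ∈ C, T a ∈ C
  nonexpansive : ∀ a ∈ C, ∀ b ∈ C, dist (T a) (T b) ≤ dist a b
  fixed_mem : p ∈ C
  fixed : T p = p
  anchor_mem : u ∈ C
  lam_mem : ∀ n, lam n ∈ Set.Icc (0:ℝ) 1
  beta_mem : ∀ n, beta n ∈ Set.Icc (0:ℝ) 1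
  start_mem : x 0 ∈ C
  y_eq : ∀ n, y n = H.W u (x n) (beta n)
  x_succ : ∀ n, x (n + 1) = H.W (y n) (T (y n)) (lam n)

namespace IsTikhonovMannIteration

variable {X : Type*} [MetricSpace X] {H : WHyp X} {C : Set X} {T : X → X} {p u : X}
  {lam beta : ℕ → ℝ} {x y : ℕ → X}

theorem y_mem_of_x_mem (h : IsTikhonovMannIteration H C T p u lam beta x y) {n : ℕ}
    (hn : x n ∈ C) : y n ∈ C :=
  h.y_eq n ▸ h.convex u h.anchor_mem (x n) hn _ (h.beta_mem n)

theorem x_mem (h : IsTikhonovMannIteration H C T p u lam beta x y) : ∀ n, x n ∈ C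
  | 0 => h.start_mem
  | n + 1 =>
    have hy := h.y_mem_of_x_mem (h.x_mem n)
    h.x_succ n ▸ h.convex _ hy _ (h.mapsTo _ hy) _ (h.lam_mem n)

theorem y_mem (h : IsTikhonovMannIteration H C T p u lam beta x y) (n : ℕ) : y n ∈ C :=
  h.y_mem_of_x_mem (h.x_mem n)

theorem dist_T_le (h : IsTikhonovMannIteration H C T p u lam beta x y) {a : X} (ha : a ∈ C) :
    dist (T a) p ≤ dist a p := by
  simpa only [h.fixed] using h.nonexpansive a ha p h.fixed_mem

theorem dist_y_le_of_dist_x_le (h : IsTikhonovMannIteration H C T p u lam beta x y) {R : ℝ}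
    (hu : dist u p ≤ R) {n : ℕ} (hn : dist (x n) p ≤ R) : dist (y n) p ≤ R :=
  h.y_eq n ▸ H.dist_W_le (h.beta_mem n) hu hn

theorem dist_x_le (h : IsTikhonovMannIteration H C T p u lam beta x y) {R : ℝ}
    (hx0 : dist (x 0) p ≤ R) (hu : dist u p ≤ R) : ∀ n, dist (x n) p ≤ R
  | 0 => hx0
  | n + 1 =>
    have hy := h.dist_y_le_of_dist_x_le hu (h.dist_x_le hx0 hu n)
    h.x_succ n ▸ H.dist_W_le (h.lam_mem n) hy ((h.dist_T_le (h.y_mem n)).trans hy)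

theorem dist_y_le (h : IsTikhonovMannIteration H C T p u lam beta x y) {R : ℝ}
    (hx0 : dist (x 0) p ≤ R) (hu : dist u p ≤ R) (n : ℕ) : dist (y n) p ≤ R :=
  h.dist_y_le_of_dist_x_le hu (h.dist_x_le hx0 hu n)

theorem dist_x_x_succ_le (h : IsTikhonovMannIteration H C T p u lam beta x y) {R : ℝ}
    (hx0 : dist (x 0) p ≤ R) (hu : dist u p ≤ R) (n : ℕ) : dist (x n) (x (n + 1)) ≤ 2 * R := by
  linarith [dist_triangle_right (x n) (x (n + 1)) p, h.dist_x_le hx0 hu n,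
    h.dist_x_le hx0 hu (n + 1)]

theorem dist_x_succ_succ_le (h : IsTikhonovMannIteration H C T p u lam beta x y) {R : ℝ}
    (hx0 : dist (x 0) p ≤ R) (hu : dist u p ≤ R) (n : ℕ) :
    dist (x (n + 1)) (x (n + 1 + 1)) ≤ beta (n + 1) * dist (x n) (x (n + 1))
      + 2 * R * (|beta (n + 1) - beta n| + |lam (n + 1) - lam n|) := by
  have hux : dist u (x n) ≤ 2 * R := by
    linarith [dist_triangle_right u (x n) p, h.dist_x_le hx0 hu n]
  have hyTy : dist (y n) (T (y n)) ≤ 2 * R := by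
    linarith [dist_triangle_right (y n) (T (y n)) p, h.dist_y_le hx0 hu n,
      h.dist_T_le (h.y_mem n)]
  have hyy : dist (y (n + 1)) (y n)
      ≤ beta (n + 1) * dist (x n) (x (n + 1)) + |beta (n + 1) - beta n| * (2 * R) := by
    rw [h.y_eq, h.y_eq, dist_comm (x n)]
    calc _ ≤ (1 - beta (n + 1)) * dist u u + beta (n + 1) * dist (x (n + 1)) (x n)
          + |beta (n + 1) - beta n| * dist u (x n) :=
          H.dist_W_W_le _ _ _ _ (h.beta_mem _) (h.beta_mem _)
      _ ≤ _ := by rw [dist_self, mul_zero, zero_add]; gcongr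
  have hxx : dist (x (n + 1 + 1)) (x (n + 1))
      ≤ dist (y (n + 1)) (y n) + |lam (n + 1) - lam n| * (2 * R) := by
    have hTT := h.nonexpansive _ (h.y_mem (n + 1)) _ (h.y_mem n)
    rw [h.x_succ (n + 1), h.x_succ n]
    calc _ ≤ (1 - lam (n + 1)) * dist (y (n + 1)) (y n)
          + lam (n + 1) * dist (T (y (n + 1))) (T (y n))
          + |lam (n + 1) - lam n| * dist (y n) (T (y n)) :=
          H.dist_W_W_le _ _ _ _ (h.lam_mem _) (h.lam_mem _)
      _ ≤ (1 - lam (n + 1)) * dist (y (n + 1)) (y n) + lam (n + 1) * dist (y (n + 1)) (y n)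
          + |lam (n + 1) - lam n| * (2 * R) := by gcongr; exact (h.lam_mem _).1
      _ = _ := by ring
  rw [dist_comm]
  linarith

theorem dist_x_x_succ_le_prod_add_sum (h : IsTikhonovMannIteration H C T p u lam beta x y)
    {R : ℝ} (hx0 : dist (x 0) p ≤ R) (hu : dist u p ≤ R) {N n : ℕ} (hNn : N ≤ n) :
    dist (x n) (x (n + 1)) ≤ (∏ j ∈ Finset.Ioc N n, beta j) * (2 * R)
      + 2 * R * (∑ i ∈ Finset.Ico N n, |beta (i + 1) - beta i|
        + ∑ i ∈ Finset.Ico N n, |lam (i + 1) - lam i|) := by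
  have hR : 0 ≤ R := dist_nonneg.trans hu
  have hunfold := le_prod_mul_add_sum_of_le_mul_add (a := fun m => dist (x m) (x (m + 1)))
    (c := fun m => 2 * R * (|beta (m + 1) - beta m| + |lam (m + 1) - lam m|))
    h.beta_mem (fun m => by positivity) (h.dist_x_succ_succ_le hx0 hu) hNn
  rw [← Finset.sum_add_distrib, Finset.mul_sum]
  refine hunfold.trans (add_le_add_left ?_ _)
  exact mul_le_mul_of_nonneg_left (h.dist_x_x_succ_le hx0 hu N)
    (Finset.prod_nonneg fun j _ => (h.beta_mem j).1)

end IsTikhonovMannIteration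

theorem tm_as_reg_C1q
    {X : Type*} [MetricSpace X] (H : WHyp X) (C : Set X)
    (hCconv : ∀ x ∈ C, ∀ y ∈ C, ∀ l ∈ Set.Icc (0:ℝ) 1, H.W x y l ∈ C)
    (T : X → X) (hTmaps : ∀ x ∈ C, T x ∈ C)
    (hTne : ∀ x ∈ C, ∀ y ∈ C, dist (T x) (T y) ≤ dist x y)
    (p : X) (hpC : p ∈ C) (hpfix : T p = p)
    (u : X) (huC : u ∈ C)
    (lam beta : ℕ → ℝ)
    (hlam : ∀ n, lam n ∈ Set.Icc (0:ℝ) 1) (hbeta : ∀ n, beta n ∈ Set.Icc (0:ℝ) 1)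
    (x y : ℕ → X) (hx0 : x 0 ∈ C)
    (hy : ∀ n, y n = H.W u (x n) (beta n))
    (hx : ∀ n, x (n + 1) = H.W (y n) (T (y n)) (lam n))
    (M : ℝ) (hM : M = max (dist (x 0) p) (dist u p))
    (σ₁ σ₃ σ₄ : ℕ → ℕ)
    (hσ₁ : ∀ n : ℕ, (n : ℝ) ≤ ∑ i ∈ Finset.range (σ₁ n + 1), (1 - beta i))
    (hσ₃ : ∀ k : ℕ, ∀ n ≥ σ₃ k, ∀ q : ℕ,
      ∑ i ∈ Finset.Icc (n + 1) (n + q), |beta (i + 1) - beta i| ≤ 1 / (k + 1))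
    (hσ₄ : ∀ k : ℕ, ∀ n ≥ σ₄ k, ∀ q : ℕ,
      ∑ i ∈ Finset.Icc (n + 1) (n + q), |lam (i + 1) - lam i| ≤ 1 / (k + 1))
    (K : ℕ) (hK : M ≤ (K : ℝ))
    (χ : ℕ → ℕ)
    (hχ : ∀ k : ℕ, χ k = max (σ₃ (8 * K * (k + 1) - 1)) (σ₄ (8 * K * (k + 1) - 1)))
    (Sg : ℕ → ℕ)
    (hSg : ∀ k : ℕ,
      Sg k = σ₁ (χ (3 * k + 2) + 2 + ⌈Real.log (6 * K * (k + 1))⌉₊) + 1) :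
    ∀ k : ℕ, ∀ n ≥ Sg k, dist (x n) (x (n + 1)) ≤ 1 / (k + 1) := by
  intro k n hn
  have hTM : IsTikhonovMannIteration H C T p u lam beta x y :=
    ⟨hCconv, hTmaps, hTne, hpC, hpfix, huC, hlam, hbeta, hx0, hy, hx⟩
  obtain ⟨hx0K, huK⟩ : dist (x 0) p ≤ K ∧ dist u p ≤ K := max_le_iff.mp (hM ▸ hK)
  rcases Nat.eq_zero_or_pos K with rfl | hKpos
  · calc dist (x n) (x (n + 1)) ≤ 2 * ((0 : ℕ) : ℝ) := hTM.dist_x_x_succ_le hx0K huK n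
      _ ≤ 1 / (k + 1) := by simp only [Nat.cast_zero, mul_zero]; positivity
  rw [hSg] at hn
  set N := χ (3 * k + 2)
  have hNn : N + 1 ≤ n := by
    have := le_add_one_of_rate_of_divergence (fun i => (hbeta i).1) hσ₁
      (N + 2 + ⌈Real.log (6 * K * (k + 1))⌉₊)
    omega
  have hP := prod_Ioc_le_inv_of_rate_of_divergence hbeta hσ₁ (r := 6 * K * (k + 1))
    (by positivity) (N := N + 1) (n := n) (Nat.le_of_succ_le hn)
  have hSβ := sum_Ico_le_of_cauchy_modulus hσ₃ (j := 8 * K * (3 * k + 2 + 1)) (by positivity)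
    (hχ (3 * k + 2) ▸ le_max_left _ _) n
  have hSlam := sum_Ico_le_of_cauchy_modulus hσ₄ (j := 8 * K * (3 * k + 2 + 1)) (by positivity)
    (hχ (3 * k + 2) ▸ le_max_right _ _) n
  calc dist (x n) (x (n + 1)) ≤ _ := hTM.dist_x_x_succ_le_prod_add_sum hx0K huK hNn
    _ ≤ (6 * (K : ℝ) * (k + 1))⁻¹ * (2 * K)
        + 2 * (K : ℝ) * (1 / ((8 * K * (3 * k + 2 + 1) : ℕ) : ℝ)
          + 1 / ((8 * K * (3 * k + 2 + 1) : ℕ) : ℝ)) := by gcongr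
    _ = 1 / (2 * (k + 1)) := by push_cast; field_simp; ring
    _ ≤ 1 / (k + 1) := by gcongr; linarith
end
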